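/- arXiv:2007.02118 — 5 statements merged into one kernel-verified Lean document; each statement's English description precedes it below -/
import Mathlib

section
/- The support of the function s_c is the star S(c) of the ray spanned by c, i.e., the union of all cones of F having the ray through c as a face. Consequently, for a monomial s_{c_{i_1}}^{h_1} ⋯ s_{c_{i_s}}^{h_s} with all h_j > 0, the product is identically zero on V if and only if c_{i_1},...,c_{i_s} do not span a cone of F; if they do span a cone C, the support of the product is the star S(C). -/
open scoped BigOperators

/-- A complete simplicial fan in a real vector space `V`, with rays indexed by `ι`
(with primitive ray generators `c i`) and cones given by the finite sets of rays
spanning them.  Completeness is expressed by the fact that every point of `V` has a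
unique representation as a positive combination of the rays of a (unique) cone. -/
structure SimplicialFan (V : Type*) [AddCommGroup V] [Module ℝ V]
    (ι : Type*) [Fintype ι] [DecidableEq ι] where
  c : ι → V
  faces : Set (Finset ι)
  empty_mem : ∅ ∈ faces
  down_closed : ∀ S ∈ faces, ∀ S' ⊆ S, S' ∈ faces
  indep : ∀ S ∈ faces, LinearIndependent ℝ (fun i : S => c i)
  complete : ∀ v : V, ∃! p : Finset ι × (ι → ℝ),
      p.1 ∈ faces ∧ (∀ i ∈ p.1, 0 < p.2 i) ∧ (∀ i ∉ p.1, p.2 i = 0) ∧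
      v = ∑ i ∈ p.1, p.2 i • c i

namespace SimplicialFan

variable {V : Type*} [AddCommGroup V] [Module ℝ V]
variable {ι : Type*} [Fintype ι] [DecidableEq ι]

/-- The (closed) cone of the fan spanned by the set of rays `S`. -/
def cone (F : SimplicialFan V ι) (S : Finset ι) : Set V :=
  {v | ∃ a : ι → ℝ, (∀ i, 0 ≤ a i) ∧ (∀ i ∉ S, a i = 0) ∧ v = ∑ i ∈ S, a i • F.c i}

/-- The relative interior of the cone spanned by the set of rays `S`. -/
def relint (F : SimplicialFan V ι) (S : Finset ι) : Set V :=
  {v | ∃ a : ι → ℝ, (∀ i ∈ S, 0 < a i) ∧ v = ∑ i ∈ S, a i • F.c i}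

/-- `s : ι → V → ℝ` is the family of continuous piecewise linear "coordinate"
functions of the fan `F`: `s i` is continuous and, on the relative interior of each
cone, reads off the coefficient of the ray `c i` (being `0` if `i` is not a ray of
that cone). -/
def IsRayFunctions [TopologicalSpace V] (F : SimplicialFan V ι) (s : ι → V → ℝ) : Prop :=
  (∀ i, Continuous (s i)) ∧
  ∀ S ∈ F.faces, ∀ a : ι → ℝ, (∀ i ∈ S, 0 < a i) → (∀ i ∉ S, a i = 0) →
    ∀ i, s i (∑ j ∈ S, a j • F.c j) = a i

end SimplicialFan


section Aux

namespace SimplicialFan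

variable {V : Type*} [NormedAddCommGroup V] [NormedSpace ℝ V] [FiniteDimensional ℝ V]
variable {ι : Type*} [Fintype ι] [DecidableEq ι]

lemma exists_rep (F : SimplicialFan V ι) (v : V) :
    ∃ S ∈ F.faces, ∃ a : ι → ℝ, (∀ i ∈ S, 0 < a i) ∧ (∀ i ∉ S, a i = 0) ∧
      v = ∑ i ∈ S, a i • F.c i := by
  obtain ⟨p, ⟨h1, h2, h3, h4⟩, -⟩ := F.complete v
  exact ⟨p.1, h1, p.2, h2, h3, h4⟩

lemma isClosed_cone (F : SimplicialFan V ι) {S : Finset ι} (hS : S ∈ F.faces) :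
    IsClosed (F.cone S) := by
  set f : (↥S → ℝ) →ₗ[ℝ] V :=
    Fintype.linearCombination ℝ (fun i : S => F.c i) with hf
  have hker : LinearMap.ker f = ⊥ := by
    rw [LinearMap.ker_eq_bot']
    intro g hg
    have hz : ∑ i : S, g i • F.c (i : ι) = 0 := by
      simpa [hf, Fintype.linearCombination_apply] using hg
    have := (Fintype.linearIndependent_iff.mp (F.indep S hS)) g hz
    funext i; exact this i
  have hset : IsClosed {b : S → ℝ | ∀ i, 0 ≤ b i} := by
    have : {b : S → ℝ | ∀ i, 0 ≤ b i} = ⋂ i, {b : S → ℝ | 0 ≤ b i} := by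
      ext b; simp [Set.mem_iInter]
    rw [this]
    exact isClosed_iInter fun i => isClosed_le continuous_const (continuous_apply i)
  have himg : F.cone S = f '' {b | ∀ i, 0 ≤ b i} := by
    ext v
    constructor
    · rintro ⟨a, ha0, haz, rfl⟩
      refine ⟨fun i => a i, fun i => ha0 i, ?_⟩
      simp only [hf, Fintype.linearCombination_apply]
      rw [Finset.univ_eq_attach, Finset.sum_attach S (fun i => a i • F.c i)]
    · rintro ⟨b, hb, rfl⟩
      refine ⟨fun i => if h : i ∈ S then b ⟨i, h⟩ else 0, ?_, ?_, ?_⟩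
      · intro i
        by_cases h : i ∈ S
        · simp only [dif_pos h]; exact hb _
        · simp only [dif_neg h]; exact le_rfl
      · intro i hi; simp only [dif_neg hi]
      · simp only [hf, Fintype.linearCombination_apply]
        rw [Finset.univ_eq_attach, ← Finset.sum_attach S
          (fun i => (if h : i ∈ S then b ⟨i, h⟩ else 0) • F.c i)]
        refine Finset.sum_congr rfl fun i _ => ?_
        rw [dif_pos i.2]
  rw [himg]
  exact (LinearMap.isClosedEmbedding_of_injective hker).isClosedMap _ hset

lemma closure_support_prod (F : SimplicialFan V ι) (s : ι → V → ℝ)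
    (hs : F.IsRayFunctions s) (J : Finset ι) (h : ι → ℕ)
    (hpos : ∀ i ∈ J, 0 < h i) (hJ : J ∈ F.faces) :
    closure (Function.support (fun v => ∏ i ∈ J, (s i v) ^ h i)) =
      ⋃ S ∈ {S ∈ F.faces | J ⊆ S}, F.cone S := by
  apply subset_antisymm
  · apply closure_minimal
    · intro v hv
      obtain ⟨S, hS, a, ha0, haz, hrep⟩ := F.exists_rep v
      have hsv : ∀ i, s i v = a i := fun i => by
        rw [hrep]; exact hs.2 S hS a ha0 haz i
      have hvne : (∏ i ∈ J, (s i v) ^ h i) ≠ 0 := hv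
      have hJS : J ⊆ S := by
        intro i hi
        by_contra hiS
        refine hvne (Finset.prod_eq_zero hi ?_)
        rw [hsv i, haz i hiS, zero_pow (hpos i hi).ne']
      refine Set.mem_biUnion ⟨hS, hJS⟩ ⟨a, ?_, haz, hrep⟩
      intro i
      by_cases hiS : i ∈ S
      · exact (ha0 i hiS).le
      · rw [haz i hiS]
    · refine Set.Finite.isClosed_biUnion (Set.toFinite _) ?_
      rintro S ⟨hS, -⟩
      exact F.isClosed_cone hS
  · refine Set.iUnion₂_subset ?_
    rintro S ⟨hS, hJS⟩ v ⟨a, ha0, haz, rfl⟩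
    have key : ∀ n : ℕ, (∑ i ∈ S, (a i + 1/((n : ℝ)+1)) • F.c i) ∈
        Function.support (fun v => ∏ i ∈ J, (s i v) ^ h i) := by
      intro n
      set a' : ι → ℝ := fun i => if i ∈ S then a i + 1/((n : ℝ)+1) else 0 with ha'
      have hpos' : ∀ i ∈ S, 0 < a' i := by
        intro i hi
        simp only [ha', if_pos hi]
        exact add_pos_of_nonneg_of_pos (ha0 i) (by positivity)
      have hz' : ∀ i ∉ S, a' i = 0 := by
        intro i hi; simp only [ha', if_neg hi]
      have hsum : (∑ i ∈ S, (a i + 1/((n : ℝ)+1)) • F.c i) = ∑ i ∈ S, a' i • F.c i :=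
        Finset.sum_congr rfl fun i hi => by simp only [ha', if_pos hi]
      have hval : ∀ i, s i (∑ i ∈ S, (a i + 1/((n : ℝ)+1)) • F.c i) = a' i := fun i => by
        rw [hsum]; exact hs.2 S hS a' hpos' hz' i
      have : (∏ i ∈ J, (s i (∑ i ∈ S, (a i + 1/((n : ℝ)+1)) • F.c i)) ^ h i) ≠ 0 := by
        rw [Finset.prod_ne_zero_iff]
        intro i hi
        rw [hval i]
        exact pow_ne_zero _ (hpos' i (hJS hi)).ne'
      exact this
    have hlim : Filter.Tendsto (fun n : ℕ => ∑ i ∈ S, (a i + 1/((n : ℝ)+1)) • F.c i)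
        Filter.atTop (nhds (∑ i ∈ S, a i • F.c i)) := by
      have heq : ∀ n : ℕ, (∑ i ∈ S, (a i + 1/((n : ℝ)+1)) • F.c i)
          = (∑ i ∈ S, a i • F.c i) + (1/((n : ℝ)+1)) • ∑ i ∈ S, F.c i := by
        intro n
        rw [Finset.smul_sum, ← Finset.sum_add_distrib]
        exact Finset.sum_congr rfl fun i _ => by rw [add_smul]
      simp only [heq]
      have h2 := (tendsto_one_div_add_atTop_nhds_zero_nat (𝕜 := ℝ)).smul_const (∑ i ∈ S, F.c i)
      simpa using tendsto_const_nhds.add h2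
    exact mem_closure_of_tendsto hlim (Filter.Eventually.of_forall key)

end SimplicialFan

end Aux

/-- The support of `s_c` is the star `S(c)` of the ray through `c`,
and for a monomial `s_{c_{i_1}}^{h_1} ⋯ s_{c_{i_s}}^{h_s}` (all exponents positive),
the product is identically zero iff the rays `c_{i_1}, …, c_{i_s}` do not span a cone
of `F`; if they span a cone `C`, the support of the product is the star `S(C)`. -/
theorem stmt3 {V : Type*} [NormedAddCommGroup V] [NormedSpace ℝ V]
    [FiniteDimensional ℝ V] {ι : Type*} [Fintype ι] [DecidableEq ι]
    (F : SimplicialFan V ι) (hrays : ∀ i, ({i} : Finset ι) ∈ F.faces)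
    (s : ι → V → ℝ) (hs : F.IsRayFunctions s) :
    (∀ i : ι, closure (Function.support (s i)) =
        ⋃ S ∈ {S ∈ F.faces | i ∈ S}, F.cone S) ∧
    (∀ (J : Finset ι) (h : ι → ℕ), J.Nonempty → (∀ i ∈ J, 0 < h i) →
      (((fun v => ∏ i ∈ J, (s i v) ^ h i) = (0 : V → ℝ)) ↔ J ∉ F.faces) ∧
      (J ∈ F.faces →
        closure (Function.support (fun v => ∏ i ∈ J, (s i v) ^ h i)) =
          ⋃ S ∈ {S ∈ F.faces | J ⊆ S}, F.cone S)) := by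
  constructor
  · intro i
    have h1 : Function.support (s i)
        = Function.support (fun v => ∏ j ∈ ({i} : Finset ι), (s j v) ^ (1 : ℕ)) := by
      ext v; simp [Function.mem_support]
    have h2 : {S ∈ F.faces | ({i} : Finset ι) ⊆ S} = {S ∈ F.faces | i ∈ S} := by
      ext S; simp [Finset.singleton_subset_iff]
    rw [h1, F.closure_support_prod s hs {i} (fun _ => 1) (by simp) (hrays i), h2]
  · intro J h hJne hpos
    refine ⟨⟨?_, ?_⟩, fun hJ => F.closure_support_prod s hs J h hpos hJ⟩
    · intro hP hJ
      set a : ι → ℝ := fun i => if i ∈ J then 1 else 0 with ha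
      have h0 : ∀ i ∈ J, (0:ℝ) < a i := fun i hi => by simp [ha, if_pos hi]
      have hz : ∀ i ∉ J, a i = 0 := fun i hi => by simp [ha, if_neg hi]
      have hval : ∀ i, s i (∑ j ∈ J, a j • F.c j) = a i := hs.2 J hJ a h0 hz
      have hone : (∏ i ∈ J, (s i (∑ j ∈ J, a j • F.c j)) ^ h i) = 1 := by
        refine Finset.prod_eq_one fun i hi => ?_
        rw [hval i]
        simp [ha, if_pos hi]
      have hzero := congrFun hP (∑ j ∈ J, a j • F.c j)
      simp only [Pi.zero_apply] at hzero
      rw [hone] at hzero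
      exact one_ne_zero hzero
    · intro hJ
      funext v
      obtain ⟨S, hS, a, ha0, haz, hrep⟩ := F.exists_rep v
      have hsv : ∀ i, s i v = a i := fun i => by
        rw [hrep]; exact hs.2 S hS a ha0 haz i
      have hns : ¬ J ⊆ S := fun hsub => hJ (F.down_closed S hS J hsub)
      obtain ⟨i, hiJ, hiS⟩ := Finset.not_subset.mp hns
      simp only [Pi.zero_apply]
      exact Finset.prod_eq_zero hiJ (by rw [hsv i, haz i hiS, zero_pow (hpos i hiJ).ne'])
end

section
/- Let F be a complete simplicial fan with ray generators c_1,...,c_N, and let I_F ⊂ ℚ[x_{c_1},...,x_{c_N}] be the ideal generated by the square-free monomials ∏_{c∈J} x_c over subsets J of ray generators not spanning a cone of F (the Stanley–Reisner ideal). Then the kernel of the ℚ-algebra homomorphism ρ_F : ℚ[x_{c_1},...,x_{c_N}] → C(V) sending x_c to s_c equals I_F; in particular the Stanley–Reisner ring A_F = ℚ[x_c]/I_F embeds into the algebra of continuous functions on V. -/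
open scoped BigOperators
open MvPolynomial

section Aux
variable {ι : Type*} [DecidableEq ι]

/-- Setting variables outside `S` to zero kills monomials whose support is not in `S`
and fixes the others. -/
lemma sr_aeval_monomial (S : Finset ι) (m : ι →₀ ℕ) (r : ℝ) :
    MvPolynomial.aeval (fun i => if i ∈ S then (X i : MvPolynomial ι ℝ) else 0)
      (monomial m r) = if m.support ⊆ S then monomial m r else 0 := by
  rw [aeval_monomial]
  by_cases h : m.support ⊆ S
  · rw [if_pos h, monomial_eq, MvPolynomial.algebraMap_eq]
    congr 1
    apply Finsupp.prod_congr
    intro i hi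
    rw [if_pos (h hi)]
  · rw [if_neg h]
    obtain ⟨i, hi, hiS⟩ := Finset.not_subset.mp h
    rw [Finsupp.prod, Finset.prod_eq_zero hi]
    · ring
    · rw [if_neg hiS]
      exact zero_pow (Finsupp.mem_support_iff.mp hi)

/-- If a real polynomial vanishes at all points supported on `S` with positive
`S`-coordinates, then every coefficient supported in `S` vanishes. -/
lemma sr_coeff_zero (S : Finset ι) (q : MvPolynomial ι ℝ)
    (hvan : ∀ a : ι → ℝ, (∀ i ∈ S, 0 < a i) → (∀ i ∉ S, a i = 0) → eval a q = 0)
    (m : ι →₀ ℕ) (hm : m.support ⊆ S) : coeff m q = 0 := by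
  set g : ι → MvPolynomial ι ℝ := fun i => if i ∈ S then (X i : MvPolynomial ι ℝ) else 0
    with hg
  have hqS : MvPolynomial.aeval g q = 0 := by
    apply MvPolynomial.funext (q := 0)
    intro b
    rw [map_zero]
    -- one-variable polynomial trick
    set G : ι → Polynomial ℝ := fun i => if i ∈ S then Polynomial.C (b i) + Polynomial.X
      else 0 with hG
    set φ : Polynomial ℝ := MvPolynomial.eval₂ Polynomial.C G q with hφ
    have hev : ∀ t : ℝ, φ.eval t = eval (fun i => if i ∈ S then b i + t else 0) q := by
      intro t
      have h1 : (Polynomial.evalRingHom t) (MvPolynomial.eval₂ Polynomial.C G q) =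
          MvPolynomial.eval₂ ((Polynomial.evalRingHom t).comp Polynomial.C)
            (⇑(Polynomial.evalRingHom t) ∘ G) q :=
        MvPolynomial.eval₂_comp_left _ _ _ _
      have h2 : (Polynomial.evalRingHom t).comp Polynomial.C = RingHom.id ℝ := by
        ext x; simp
      have h3 : (⇑(Polynomial.evalRingHom t) ∘ G) = fun i => if i ∈ S then b i + t else 0 := by
        funext i
        by_cases hiS : i ∈ S <;> simp [hG, hiS]
      rw [hφ, show Polynomial.eval t (MvPolynomial.eval₂ Polynomial.C G q) =
        (Polynomial.evalRingHom t) (MvPolynomial.eval₂ Polynomial.C G q) from rfl,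
        h1, h2, h3, MvPolynomial.eval₂_id]
    have hφ0 : φ = 0 := by
      apply Polynomial.eq_zero_of_infinite_isRoot
      apply Set.Infinite.mono _ (Set.Ioi_infinite (1 + ∑ i ∈ S, |b i|))
      intro t ht
      simp only [Set.mem_Ioi] at ht
      simp only [Set.mem_setOf_eq, Polynomial.IsRoot, hev t]
      apply hvan
      · intro i hi
        rw [if_pos hi]
        have h1 : |b i| ≤ ∑ j ∈ S, |b j| :=
          Finset.single_le_sum (fun j _ => abs_nonneg (b j)) hi
        have := neg_abs_le (b i)
        linarith
      · intro i hi; rw [if_neg hi]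
    -- evaluate at t = 0
    have h0 := hev 0
    rw [hφ0] at h0
    simp only [Polynomial.eval_zero] at h0
    have hfix : ∀ i, eval b (g i) = if i ∈ S then b i + 0 else 0 := by
      intro i
      by_cases hiS : i ∈ S <;> simp [hg, hiS]
    calc eval b (MvPolynomial.aeval g q)
        = eval b (eval₂ C g q) := by rw [MvPolynomial.aeval_def, MvPolynomial.algebraMap_eq]
      _ = eval₂ (RingHom.id ℝ) b (eval₂ C g q) := by rw [MvPolynomial.eval₂_id]
      _ = eval₂ (RingHom.id ℝ) (fun i => eval₂ (RingHom.id ℝ) b (g i)) q :=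
          Eq.symm (MvPolynomial.eval₂_assoc (RingHom.id ℝ) b g q)
      _ = eval (fun i => if i ∈ S then b i + 0 else 0) q := by
          rw [MvPolynomial.eval₂_id]
          have hfun : (fun i => eval₂ (RingHom.id ℝ) b (g i)) =
              fun i => if i ∈ S then b i + 0 else 0 := by
            funext i
            rw [MvPolynomial.eval₂_id, hfix]
          rw [hfun]
      _ = 0 := h0.symm
  -- extract coefficient m from aeval g q = 0
  by_cases hmem : m ∈ q.support
  · have : coeff m (MvPolynomial.aeval g q) = coeff m q := by
      conv_lhs => rw [← support_sum_monomial_coeff q]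
      rw [map_sum, coeff_sum, Finset.sum_eq_single m]
      · rw [hg, sr_aeval_monomial, if_pos hm, coeff_monomial, if_pos rfl]
      · intro v hv hvm
        rw [hg, sr_aeval_monomial]
        by_cases hvS : v.support ⊆ S
        · rw [if_pos hvS, coeff_monomial, if_neg hvm]
        · rw [if_neg hvS, coeff_zero]
      · intro h; exact absurd hmem h
    rw [← this, hqS, coeff_zero]
  · exact MvPolynomial.notMem_support_iff.mp hmem
end Aux



open scoped BigOperators

open MvPolynomial in
/-- The kernel of the evaluation homomorphism
`ρ_F : ℚ[x_c] → C(V)`, `x_c ↦ s_c`, is exactly the Stanley–Reisner ideal `I_F`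
generated by the square-free monomials indexed by sets of rays not spanning a cone of
`F`; in particular the Stanley–Reisner ring embeds into the continuous functions. -/
theorem stmt4 {V : Type*} [NormedAddCommGroup V] [NormedSpace ℝ V]
    [FiniteDimensional ℝ V] {ι : Type*} [Fintype ι] [DecidableEq ι]
    (F : SimplicialFan V ι) (s : ι → V → ℝ) (hs : F.IsRayFunctions s) :
    RingHom.ker (MvPolynomial.aeval (R := ℚ) (fun i => (s i : V → ℝ))).toRingHom =
      Ideal.span {m : MvPolynomial ι ℚ |
        ∃ J : Finset ι, J ∉ F.faces ∧ m = ∏ i ∈ J, MvPolynomial.X i} := by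
  classical
  apply le_antisymm
  · -- ker ≤ span
    intro p hp
    rw [RingHom.mem_ker] at hp
    have hp' : MvPolynomial.aeval (R := ℚ) (fun i => (s i : V → ℝ)) p = 0 := hp
    -- Step A: vanishing at points supported on faces
    have hA : ∀ S ∈ F.faces, ∀ a : ι → ℝ, (∀ i ∈ S, 0 < a i) → (∀ i ∉ S, a i = 0) →
        MvPolynomial.eval a (MvPolynomial.map (algebraMap ℚ ℝ) p) = 0 := by
      intro S hS a hpos hzero
      set v : V := ∑ i ∈ S, a i • F.c i with hv
      have h2 : (Pi.evalAlgHom ℚ (fun _ : V => ℝ) v).comp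
          (MvPolynomial.aeval (R := ℚ) (fun i => (s i : V → ℝ))) =
          MvPolynomial.aeval (fun i => s i v) :=
        MvPolynomial.comp_aeval _ _
      have h3 : MvPolynomial.aeval (R := ℚ) (fun i => s i v) p = 0 := by
        rw [← DFunLike.congr_fun h2 p]
        show (MvPolynomial.aeval (R := ℚ) (fun i => (s i : V → ℝ)) p) v = 0
        rw [hp']
        rfl
      have h4 : (fun i => s i v) = a := funext fun i => hs.2 S hS a hpos hzero i
      rw [h4] at h3
      rw [MvPolynomial.eval_map, ← MvPolynomial.aeval_def]
      exact h3
    -- Step B: every monomial of p has non-face support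
    have key : ∀ m ∈ p.support, m.support ∉ F.faces := by
      intro m hmem hface
      have hz := sr_coeff_zero m.support (MvPolynomial.map (algebraMap ℚ ℝ) p)
        (fun a hpos hzero => hA m.support hface a hpos hzero) m subset_rfl
      rw [MvPolynomial.coeff_map] at hz
      have : MvPolynomial.coeff m p = 0 := by
        have := (algebraMap ℚ ℝ).injective
        apply this
        rw [hz, map_zero]
      exact MvPolynomial.mem_support_iff.mp hmem this
    -- Step C: conclude membership
    rw [← MvPolynomial.support_sum_monomial_coeff p]
    apply Ideal.sum_mem
    intro m hmem
    have hJ := key m hmem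
    have hdecomp : MvPolynomial.monomial m (MvPolynomial.coeff m p) =
        (MvPolynomial.C (MvPolynomial.coeff m p) *
          ∏ i ∈ m.support, (MvPolynomial.X i : MvPolynomial ι ℚ) ^ (m i - 1)) *
        ∏ i ∈ m.support, (MvPolynomial.X i : MvPolynomial ι ℚ) := by
      rw [MvPolynomial.monomial_eq, Finsupp.prod, mul_assoc, ← Finset.prod_mul_distrib]
      congr 1
      apply Finset.prod_congr rfl
      intro i hi
      rw [← pow_succ]
      congr 1
      exact (Nat.succ_pred_eq_of_pos
        (Nat.pos_of_ne_zero (Finsupp.mem_support_iff.mp hi))).symm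
    rw [hdecomp]
    exact Ideal.mul_mem_left _ _ (Ideal.subset_span ⟨m.support, hJ, rfl⟩)
  · -- span ≤ ker
    rw [Ideal.span_le]
    rintro mq ⟨J, hJ, rfl⟩
    rw [SetLike.mem_coe, RingHom.mem_ker]
    show MvPolynomial.aeval (R := ℚ) (fun i => (s i : V → ℝ))
      (∏ i ∈ J, MvPolynomial.X i) = 0
    rw [map_prod]
    simp only [MvPolynomial.aeval_X]
    funext v
    obtain ⟨⟨S, a⟩, ⟨hS, hpos, hzero, hv⟩, -⟩ := F.complete v
    have hsv : ∀ i, s i v = a i := by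
      intro i
      rw [hv]
      exact hs.2 S hS a hpos hzero i
    have hJS : ¬ J ⊆ S := fun h => hJ (F.down_closed S hS J h)
    obtain ⟨i, hiJ, hiS⟩ := Finset.not_subset.mp hJS
    calc (∏ j ∈ J, s j) v = ∏ j ∈ J, s j v := Finset.prod_apply v J s
      _ = 0 := Finset.prod_eq_zero hiJ (by rw [hsv i]; exact hzero i hiS)
end

section
/- Let G be a simplicial refinement of a complete simplicial fan F (every cone of F is a union of cones of G). Define γ : ℚ[x_c : c ray of F] → ℚ[y_d : d ray of G] by γ(x_c) = Σ_d s_c(d) y_d, where s_c is the piecewise-linear function of F and d ranges over the ray generators of G. Then γ maps the Stanley–Reisner ideal I_F into the Stanley–Reisner ideal I_G, hence induces a ring homomorphism A_F → A_G; moreover the induced map is compatible with the embeddings of A_F and A_G into C(V), i.e., μ_F = μ_G ∘ γ. -/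
open scoped BigOperators

section Aux

open SimplicialFan

variable {V : Type*} [NormedAddCommGroup V] [NormedSpace ℝ V]
variable {ι ι' : Type*} [Fintype ι] [DecidableEq ι] [Fintype ι'] [DecidableEq ι']

/-- The ray functions read off the coordinates of any nonnegative combination
supported on a face. -/
lemma aux_coord (F : SimplicialFan V ι) (sF : ι → V → ℝ) (hsF : F.IsRayFunctions sF)
    {S : Finset ι} (hS : S ∈ F.faces) (b : ι → ℝ) (hb : ∀ i, 0 ≤ b i)
    (hb0 : ∀ i ∉ S, b i = 0) (i : ι) :
    sF i (∑ j ∈ S, b j • F.c j) = b i := by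
  classical
  set T := S.filter (fun j => b j ≠ 0) with hT
  have hTS : T ⊆ S := Finset.filter_subset _ _
  have hTf : T ∈ F.faces := F.down_closed S hS T hTS
  have hsum : ∑ j ∈ T, b j • F.c j = ∑ j ∈ S, b j • F.c j := by
    apply Finset.sum_subset hTS
    intro j hjS hjT
    have hbj : b j = 0 := by
      by_contra h
      exact hjT (Finset.mem_filter.2 ⟨hjS, h⟩)
    simp [hbj]
  rw [← hsum]
  refine hsF.2 T hTf b (fun j hj => lt_of_le_of_ne (hb j)
    (Ne.symm (Finset.mem_filter.1 hj).2)) (fun j hj => ?_) i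
  by_cases hjS : j ∈ S
  · by_contra h
    exact hj (Finset.mem_filter.2 ⟨hjS, h⟩)
  · exact hb0 j hjS

/-- Every point has a representation whose coordinates are read off by the ray
functions. -/
lemma aux_rep (F : SimplicialFan V ι) (sF : ι → V → ℝ) (hsF : F.IsRayFunctions sF)
    (v : V) :
    ∃ T ∈ F.faces, ∃ a : ι → ℝ, (∀ i, 0 ≤ a i) ∧ (∀ i ∉ T, a i = 0) ∧
      (∀ i, sF i v = a i) := by
  obtain ⟨⟨T, a⟩, ⟨hT, hpos, hzero, hv⟩, -⟩ := F.complete v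
  refine ⟨T, hT, a, fun i => ?_, hzero, fun i => ?_⟩
  · by_cases hi : i ∈ T
    · exact (hpos i hi).le
    · exact (hzero i hi).ge
  · rw [hv]
    exact hsF.2 T hT a hpos hzero i

lemma aux_nonneg (F : SimplicialFan V ι) (sF : ι → V → ℝ) (hsF : F.IsRayFunctions sF)
    (i : ι) (v : V) : 0 ≤ sF i v := by
  obtain ⟨T, _, a, ha, _, hs⟩ := aux_rep F sF hsF v
  rw [hs i]; exact ha i

/-- On a cone of the refining fan `G`, the ray functions of `F` are additive in
the natural coordinates. -/
lemma aux_lin (F : SimplicialFan V ι) (G : SimplicialFan V ι')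
    (href : ∀ S' ∈ G.faces, ∃ S ∈ F.faces, G.cone S' ⊆ F.cone S)
    (sF : ι → V → ℝ) (hsF : F.IsRayFunctions sF)
    {S' : Finset ι'} (hS' : S' ∈ G.faces) (a : ι' → ℝ) (ha : ∀ d ∈ S', 0 ≤ a d)
    (i : ι) :
    sF i (∑ d ∈ S', a d • G.c d) = ∑ d ∈ S', a d * sF i (G.c d) := by
  classical
  obtain ⟨S, hS, hsub⟩ := href S' hS'
  have hmemG : ∀ d ∈ S', G.c d ∈ G.cone S' := by
    intro d hd
    refine ⟨fun e => if e = d then 1 else 0, fun e => by positivity,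
      fun e he => if_neg (by rintro rfl; exact he hd), ?_⟩
    simp [ite_smul, Finset.sum_ite_eq', hd]
  have hmem : ∀ d, ∃ b : ι → ℝ, d ∈ S' →
      (∀ j, 0 ≤ b j) ∧ (∀ j ∉ S, b j = 0) ∧ G.c d = ∑ j ∈ S, b j • F.c j := by
    intro d
    by_cases hd : d ∈ S'
    · obtain ⟨b, hb1, hb2, hb3⟩ := hsub (hmemG d hd)
      exact ⟨b, fun _ => ⟨hb1, hb2, hb3⟩⟩
    · exact ⟨0, fun h => absurd h hd⟩
  choose b hb using hmem
  have hval : ∀ d ∈ S', sF i (G.c d) = b d i := by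
    intro d hd
    rw [(hb d hd).2.2]
    exact aux_coord F sF hsF hS (b d) (hb d hd).1 (hb d hd).2.1 i
  have hv : ∑ d ∈ S', a d • G.c d = ∑ j ∈ S, (∑ d ∈ S', a d * b d j) • F.c j := by
    calc ∑ d ∈ S', a d • G.c d
          = ∑ d ∈ S', ∑ j ∈ S, (a d * b d j) • F.c j := by
            refine Finset.sum_congr rfl fun d hd => ?_
            rw [(hb d hd).2.2, Finset.smul_sum]
            exact Finset.sum_congr rfl fun j _ => by rw [smul_smul]
        _ = ∑ j ∈ S, ∑ d ∈ S', (a d * b d j) • F.c j := Finset.sum_comm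
        _ = ∑ j ∈ S, (∑ d ∈ S', a d * b d j) • F.c j := by
            exact Finset.sum_congr rfl fun j _ => (Finset.sum_smul).symm
  rw [hv, aux_coord F sF hsF hS _ (fun j => Finset.sum_nonneg fun d hd =>
      mul_nonneg (ha d hd) ((hb d hd).1 j))
    (fun j hj => Finset.sum_eq_zero fun d hd => by rw [(hb d hd).2.1 j hj, mul_zero]) i]
  exact Finset.sum_congr rfl fun d hd => by rw [hval d hd]

/-- Decomposition of a ray function of `F` in terms of those of `G`. -/
lemma aux_key (F : SimplicialFan V ι) (G : SimplicialFan V ι')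
    (href : ∀ S' ∈ G.faces, ∃ S ∈ F.faces, G.cone S' ⊆ F.cone S)
    (sF : ι → V → ℝ) (hsF : F.IsRayFunctions sF)
    (sG : ι' → V → ℝ) (hsG : G.IsRayFunctions sG)
    (i : ι) (v : V) :
    sF i v = ∑ d, sF i (G.c d) * sG d v := by
  classical
  obtain ⟨⟨S', a⟩, ⟨hS', hpos, hzero, hv⟩, -⟩ := G.complete v
  dsimp only at hS' hpos hzero hv
  have hG : ∀ d, sG d v = a d := by
    intro d
    rw [hv]
    exact hsG.2 S' hS' a hpos hzero d
  have h1 : sF i v = ∑ d ∈ S', a d * sF i (G.c d) := by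
    rw [hv]
    exact aux_lin F G href sF hsF hS' a (fun d hd => (hpos d hd).le) i
  rw [h1]
  rw [← Finset.sum_subset (Finset.subset_univ S')
    (fun d _ hd => by rw [hG d, hzero d hd, mul_zero])]
  exact Finset.sum_congr rfl fun d _ => by rw [hG d, mul_comm]

/-- Images of nonfaces of `F` under maps hitting rays with nonzero coordinate are
nonfaces of `G`. -/
lemma aux_nonface (F : SimplicialFan V ι) (G : SimplicialFan V ι')
    (href : ∀ S' ∈ G.faces, ∃ S ∈ F.faces, G.cone S' ⊆ F.cone S)
    (sF : ι → V → ℝ) (hsF : F.IsRayFunctions sF)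
    {J : Finset ι} (hJ : J ∉ F.faces) (h : ι → ι')
    (hne : ∀ i ∈ J, sF i (G.c (h i)) ≠ 0) :
    J.image h ∉ G.faces := by
  classical
  intro hS'
  set v : V := ∑ d ∈ J.image h, (1 : ℝ) • G.c d with hvdef
  have h1 : ∀ i, sF i v = ∑ d ∈ J.image h, sF i (G.c d) := by
    intro i
    rw [hvdef, aux_lin F G href sF hsF hS' (fun _ => (1:ℝ)) (fun _ _ => zero_le_one) i]
    simp
  obtain ⟨T, hT, a, hanneg, hazero, hs⟩ := aux_rep F sF hsF v
  have hJT : J ⊆ T := by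
    intro i hi
    have hpos : 0 < sF i v := by
      rw [h1 i]
      refine Finset.sum_pos' (fun d _ => aux_nonneg F sF hsF i (G.c d)) ?_
      exact ⟨h i, Finset.mem_image_of_mem h hi,
        lt_of_le_of_ne (aux_nonneg F sF hsF i (G.c (h i))) (Ne.symm (hne i hi))⟩
    by_contra hiT
    rw [hs i, hazero i hiT] at hpos
    exact lt_irrefl 0 hpos
  exact hJ (F.down_closed T hT J hJT)

end Aux

open MvPolynomial in
/-- If `G` is a simplicial refinement of the complete simplicial fan
`F`, the map `γ(x_c) = ∑_d s_c(d) y_d` (the coefficients `s_c(d)` being rational)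
sends the Stanley–Reisner ideal `I_F` into `I_G`, hence induces `A_F → A_G`, and is
compatible with the embeddings into `C(V)`: `μ_F = μ_G ∘ γ`. -/
theorem stmt5 {V : Type*} [NormedAddCommGroup V] [NormedSpace ℝ V]
    [FiniteDimensional ℝ V] {ι ι' : Type*} [Fintype ι] [DecidableEq ι]
    [Fintype ι'] [DecidableEq ι']
    (F : SimplicialFan V ι) (G : SimplicialFan V ι')
    (href : ∀ S' ∈ G.faces, ∃ S ∈ F.faces, G.cone S' ⊆ F.cone S)
    (sF : ι → V → ℝ) (hsF : F.IsRayFunctions sF)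
    (sG : ι' → V → ℝ) (hsG : G.IsRayFunctions sG)
    -- rationality of the values `s_c(d)` on the ray generators of `G`
    (q : ι → ι' → ℚ) (hq : ∀ i d, (q i d : ℝ) = sF i (G.c d))
    (γ : MvPolynomial ι ℚ →ₐ[ℚ] MvPolynomial ι' ℚ)
    (hγ : γ = MvPolynomial.aeval (fun i => ∑ d, MvPolynomial.C (q i d) * MvPolynomial.X d)) :
    (∀ p ∈ Ideal.span {m : MvPolynomial ι ℚ |
        ∃ J : Finset ι, J ∉ F.faces ∧ m = ∏ i ∈ J, MvPolynomial.X i},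
      γ p ∈ Ideal.span {m : MvPolynomial ι' ℚ |
        ∃ J : Finset ι', J ∉ G.faces ∧ m = ∏ d ∈ J, MvPolynomial.X d}) ∧
    (∀ p : MvPolynomial ι ℚ,
      MvPolynomial.aeval (R := ℚ) (fun d => (sG d : V → ℝ)) (γ p) =
        MvPolynomial.aeval (R := ℚ) (fun i => (sF i : V → ℝ)) p) := by
    classical
  subst hγ
  constructor
  · -- the ideal statement
    intro p hp
    have hle : Ideal.span {m : MvPolynomial ι ℚ |
          ∃ J : Finset ι, J ∉ F.faces ∧ m = ∏ i ∈ J, MvPolynomial.X i} ≤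
        Ideal.comap (MvPolynomial.aeval
            (fun i => ∑ d, MvPolynomial.C (q i d) * MvPolynomial.X d) :
            MvPolynomial ι ℚ →ₐ[ℚ] MvPolynomial ι' ℚ).toRingHom
          (Ideal.span {m : MvPolynomial ι' ℚ |
            ∃ J : Finset ι', J ∉ G.faces ∧ m = ∏ d ∈ J, MvPolynomial.X d}) := by
      rw [Ideal.span_le]
      rintro m ⟨J, hJ, rfl⟩
      simp only [SetLike.mem_coe, Ideal.mem_comap, AlgHom.toRingHom_eq_coe,
        RingHom.coe_coe]
      have hJne : J.Nonempty := by
        rcases Finset.eq_empty_or_nonempty J with h | h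
        · exact absurd (h ▸ F.empty_mem) hJ
        · exact h
      rw [map_prod]
      simp only [MvPolynomial.aeval_X]
      rw [Finset.prod_sum]
      refine Ideal.sum_mem _ ?_
      intro p hp
      by_cases hzero : ∃ i : {x // x ∈ J}, (i ∈ J.attach) ∧ q i (p i i.2) = 0
      · obtain ⟨i, hi, hqi⟩ := hzero
        have : (MvPolynomial.C (q i (p i i.2)) * MvPolynomial.X (p i i.2) :
            MvPolynomial ι' ℚ) = 0 := by
          rw [hqi]; simp
        rw [Finset.prod_eq_zero hi this]
        exact Ideal.zero_mem _
      · push_neg at hzero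
        obtain ⟨j0, hj0⟩ := hJne
        set h : ι → ι' := fun i => if hi : i ∈ J then p i hi else p j0 hj0 with hhdef
        have hh : ∀ i (hi : i ∈ J), h i = p i hi := fun i hi => dif_pos hi
        have hne : ∀ i ∈ J, sF i (G.c (h i)) ≠ 0 := by
          intro i hi
          rw [← hq i (h i)]
          have : q i (h i) ≠ 0 := by
            rw [hh i hi]
            exact hzero ⟨i, hi⟩ (Finset.mem_attach _ _)
          exact_mod_cast this
        have hnonface := aux_nonface F G href sF hsF hJ h hne
        have hgen : (∏ d ∈ J.image h, MvPolynomial.X d : MvPolynomial ι' ℚ) ∈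
            Ideal.span {m : MvPolynomial ι' ℚ |
              ∃ J : Finset ι', J ∉ G.faces ∧ m = ∏ d ∈ J, MvPolynomial.X d} :=
          Ideal.subset_span ⟨J.image h, hnonface, rfl⟩
        have hdvd : (∏ d ∈ J.image h, MvPolynomial.X d : MvPolynomial ι' ℚ) ∣
            ∏ i ∈ J, MvPolynomial.X (h i) := by
          rw [← Finset.prod_fiberwise_of_maps_to
            (fun i hi => Finset.mem_image_of_mem h hi)
            (fun i => (MvPolynomial.X (h i) : MvPolynomial ι' ℚ))]
          refine Finset.prod_dvd_prod_of_dvd _ _ ?_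
          intro d hd
          obtain ⟨i, hiJ, hid⟩ := Finset.mem_image.1 hd
          have hmem : i ∈ J.filter (fun i => h i = d) :=
            Finset.mem_filter.2 ⟨hiJ, hid⟩
          have := Finset.dvd_prod_of_mem
            (fun i => (MvPolynomial.X (h i) : MvPolynomial ι' ℚ)) hmem
          simpa only [hid] using this
        have hXmem : (∏ i ∈ J, MvPolynomial.X (h i) : MvPolynomial ι' ℚ) ∈
            Ideal.span {m : MvPolynomial ι' ℚ |
              ∃ J : Finset ι', J ∉ G.faces ∧ m = ∏ d ∈ J, MvPolynomial.X d} := by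
          obtain ⟨c, hc⟩ := hdvd
          rw [hc]
          exact Ideal.mul_mem_right _ _ hgen
        have hsplit : ∏ i ∈ J.attach,
            (MvPolynomial.C (q i (p i i.2)) * MvPolynomial.X (p i i.2) :
              MvPolynomial ι' ℚ) =
            (∏ i ∈ J.attach, MvPolynomial.C (q i (p i i.2))) *
            ∏ i ∈ J, MvPolynomial.X (h i) := by
          rw [Finset.prod_mul_distrib]
          congr 1
          rw [← Finset.prod_attach J (fun i => (MvPolynomial.X (h i) : MvPolynomial ι' ℚ))]
          exact Finset.prod_congr rfl fun i _ => by rw [hh i i.2]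
        rw [hsplit]
        exact Ideal.mul_mem_left _ _ hXmem
    exact hle hp
  · -- compatibility with the embeddings
    intro p
    have hcomp : (MvPolynomial.aeval (R := ℚ) (fun d => (sG d : V → ℝ))).comp
        (MvPolynomial.aeval
          (fun i => ∑ d, MvPolynomial.C (q i d) * MvPolynomial.X d) :
          MvPolynomial ι ℚ →ₐ[ℚ] MvPolynomial ι' ℚ) =
        MvPolynomial.aeval (R := ℚ) (fun i => (sF i : V → ℝ)) := by
      apply MvPolynomial.algHom_ext
      intro i
      simp only [AlgHom.coe_comp, Function.comp_apply, MvPolynomial.aeval_X,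
        map_sum, map_mul, MvPolynomial.aeval_C]
      funext v
      have := aux_key F G href sF hsF sG hsG i v
      rw [this]
      rw [Finset.sum_apply]
      refine Finset.sum_congr rfl fun d _ => ?_
      have halg : (algebraMap ℚ (V → ℝ)) (q i d) v = ((q i d : ℝ)) := by
        simp [Pi.algebraMap_apply, Algebra.algebraMap_self]
      rw [Pi.mul_apply, halg, hq i d]
    calc MvPolynomial.aeval (R := ℚ) (fun d => (sG d : V → ℝ))
          (MvPolynomial.aeval
            (fun i => ∑ d, MvPolynomial.C (q i d) * MvPolynomial.X d) p) =
        ((MvPolynomial.aeval (R := ℚ) (fun d => (sG d : V → ℝ))).comp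
          (MvPolynomial.aeval
            (fun i => ∑ d, MvPolynomial.C (q i d) * MvPolynomial.X d) :
            MvPolynomial ι ℚ →ₐ[ℚ] MvPolynomial ι' ℚ)) p := rfl
      _ = MvPolynomial.aeval (R := ℚ) (fun i => (sF i : V → ℝ)) p := by rw [hcomp]
end

section
/- The cohomology of the differential graded algebra (D_F, d) is ℚ in degree 0 and vanishes in all positive degrees. -/
open scoped BigOperators

section KoszulModel

variable (ι : Type*) [Fintype ι] [DecidableEq ι] [LinearOrder ι]

/-- The underlying `ℚ`-module of `ℚ[x_c] ⊗ ⋀(τ_c)`: an element is the family of its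
polynomial coefficients with respect to the exterior monomials `τ_S`, `S ⊆ ι`. -/
abbrev KModel := Finset ι → MvPolynomial ι ℚ

variable {ι}

/-- The basis element `x^h τ_S` of `ℚ[x_c] ⊗ ⋀(τ_c)` (with `τ_S` the wedge of the
`τ_j`, `j ∈ S`, in increasing order). -/
noncomputable def bE (h : ι →₀ ℕ) (S : Finset ι) : KModel ι :=
  Pi.single S (MvPolynomial.monomial h 1)

/-- The Koszul differential `d` with `d x_c = 0`, `d τ_c = x_c`, extended as a graded
derivation, written in coordinates. -/
noncomputable def dK : KModel ι →ₗ[ℚ] KModel ι :=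
  LinearMap.pi fun S' : Finset ι =>
    ∑ j ∈ S'ᶜ, (((-1 : MvPolynomial ι ℚ) ^ (S'.filter (· < j)).card *
        MvPolynomial.X j) • LinearMap.proj (R := ℚ) (insert j S'))

/-- The total degree `2·(deg of the polynomial part) + |S|` submodules: the span of the
basis elements `x^h τ_S` of degree `k`. -/
noncomputable def degSub (k : ℕ) : Submodule ℚ (KModel ι) :=
  Submodule.span ℚ {m : KModel ι | ∃ (h : ι →₀ ℕ) (S : Finset ι),
    2 * (h.sum fun _ e => e) + S.card = k ∧ m = bE h S}

end KoszulModel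


section HomotopyAux

set_option linter.unusedSectionVars false

variable {ι : Type*} [Fintype ι] [DecidableEq ι] [LinearOrder ι]

/-- The monomial basis of the Koszul model. -/
noncomputable def kBasis : Module.Basis ((_ : Finset ι) × (ι →₀ ℕ)) ℚ (KModel ι) :=
  Pi.basis fun _ => MvPolynomial.basisMonomials ι ℚ

lemma kBasis_apply (S : Finset ι) (h : ι →₀ ℕ) : (kBasis ⟨S, h⟩ : KModel ι) = bE h S := by
  rw [kBasis, Pi.basis_apply, MvPolynomial.coe_basisMonomials, bE]

/-- The contracting homotopy on a basis monomial. -/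
noncomputable def Gm (h : ι →₀ ℕ) (S : Finset ι) : KModel ι :=
  if hU : (h.support ∪ S).Nonempty then
    if (h.support ∪ S).min' hU ∈ S then 0
    else bE (h - Finsupp.single ((h.support ∪ S).min' hU) 1)
      (insert ((h.support ∪ S).min' hU) S)
  else 0

lemma Gm_eq (h : ι →₀ ℕ) (S : Finset ι) {U : Finset ι} (hU : U.Nonempty)
    (hUe : h.support ∪ S = U) :
    Gm h S = if U.min' hU ∈ S then 0
      else bE (h - Finsupp.single (U.min' hU) 1) (insert (U.min' hU) S) := by
  subst hUe
  rw [Gm, dif_pos hU]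

/-- The contracting homotopy as a linear map. -/
noncomputable def Gmap : KModel ι →ₗ[ℚ] KModel ι :=
  kBasis.constr ℚ fun p => Gm p.2 p.1

lemma Gmap_bE (h : ι →₀ ℕ) (S : Finset ι) : Gmap (bE h S) = Gm h S := by
  rw [← kBasis_apply S h, Gmap, Module.Basis.constr_basis]

lemma dK_bE (h : ι →₀ ℕ) (S : Finset ι) :
    dK (bE h S) = ∑ j ∈ S, ((-1 : ℚ) ^ ((S.erase j).filter (· < j)).card) •
      bE (h + Finsupp.single j 1) (S.erase j) := by
  funext S'
  have hL : dK (bE h S) S' =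
      ∑ j ∈ S'ᶜ.filter (fun j => insert j S' = S),
        ((-1 : MvPolynomial ι ℚ) ^ (S'.filter (· < j)).card * MvPolynomial.X j) *
          MvPolynomial.monomial h 1 := by
    rw [Finset.sum_filter, dK, LinearMap.pi_apply, LinearMap.sum_apply]
    refine Finset.sum_congr rfl fun j _ => ?_
    rw [LinearMap.smul_apply, LinearMap.proj_apply, smul_eq_mul, bE, Pi.single_apply,
      mul_ite, mul_zero]
  have hR : (∑ j ∈ S, ((-1 : ℚ) ^ ((S.erase j).filter (· < j)).card) •
      bE (h + Finsupp.single j 1) (S.erase j)) S' =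
      ∑ j ∈ S.filter (fun j => S' = S.erase j),
        ((-1 : ℚ) ^ ((S.erase j).filter (· < j)).card) •
          MvPolynomial.monomial (h + Finsupp.single j 1) 1 := by
    rw [Finset.sum_filter, Finset.sum_apply]
    refine Finset.sum_congr rfl fun j _ => ?_
    rw [Pi.smul_apply, bE, Pi.single_apply, smul_ite, smul_zero]
  rw [hL, hR]
  have hset : S'ᶜ.filter (fun j => insert j S' = S) = S.filter (fun j => S' = S.erase j) := by
    ext j
    simp only [Finset.mem_filter, Finset.mem_compl]
    constructor
    · rintro ⟨hj, rfl⟩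
      exact ⟨Finset.mem_insert_self _ _, (Finset.erase_insert hj).symm⟩
    · rintro ⟨hj, rfl⟩
      exact ⟨Finset.notMem_erase _ _, Finset.insert_erase hj⟩
  rw [hset]
  refine Finset.sum_congr rfl fun j hj => ?_
  rw [Finset.mem_filter] at hj
  obtain ⟨hjS, hS'⟩ := hj
  subst hS'
  have h1 : ((-1 : MvPolynomial ι ℚ)) ^ (((S.erase j)).filter (· < j)).card =
      MvPolynomial.C ((-1 : ℚ) ^ (((S.erase j)).filter (· < j)).card) := by simp
  rw [h1, mul_assoc, MvPolynomial.C_mul']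
  congr 1
  rw [MvPolynomial.X, MvPolynomial.monomial_mul, one_mul, add_comm]

lemma union_sub_single {h : ι →₀ ℕ} {j : ι} (hj : j ∈ h.support) (S : Finset ι) :
    (h - Finsupp.single j 1).support ∪ insert j S = h.support ∪ S := by
  ext x
  simp only [Finset.mem_union, Finsupp.mem_support_iff, Finset.mem_insert,
    Finsupp.tsub_apply, Finsupp.single_apply]
  rcases eq_or_ne x j with rfl | hxj
  · have := Finsupp.mem_support_iff.1 hj
    tauto
  · rw [if_neg (fun he => hxj he.symm), Nat.sub_zero]
    tauto

lemma sum_sub_single {h : ι →₀ ℕ} {j : ι} (hj : j ∈ h.support) :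
    (h.sum fun _ e => e) = ((h - Finsupp.single j 1).sum fun _ e => e) + 1 := by
  have hle : Finsupp.single j 1 ≤ h :=
    Finsupp.single_le_iff.2 (Nat.one_le_iff_ne_zero.2 (Finsupp.mem_support_iff.1 hj))
  have hdec : h = (h - Finsupp.single j 1) + Finsupp.single j 1 := (tsub_add_cancel_of_le hle).symm
  conv_lhs => rw [hdec]
  rw [Finsupp.sum_add_index' (fun _ => rfl) (fun _ _ _ => rfl),
    Finsupp.sum_single_index rfl]

/-- The structural case analysis for `Gm`. -/
lemma Gm_cases (h : ι →₀ ℕ) (S : Finset ι) :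
    Gm h S = 0 ∨ ∃ j, j ∈ h.support ∧ j ∉ S ∧
      Gm h S = bE (h - Finsupp.single j 1) (insert j S) := by
  by_cases hU : (h.support ∪ S).Nonempty
  · by_cases hjS : (h.support ∪ S).min' hU ∈ S
    · left; rw [Gm, dif_pos hU, if_pos hjS]
    · right
      refine ⟨(h.support ∪ S).min' hU, ?_, hjS, ?_⟩
      · have := Finset.min'_mem _ hU
        rw [Finset.mem_union] at this
        tauto
      · rw [Gm, dif_pos hU, if_neg hjS]
  · left; rw [Gm, dif_neg hU]

/-- Key homotopy identity on basis monomials of positive degree. -/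
lemma hom_bE (h : ι →₀ ℕ) (S : Finset ι) (hU : (h.support ∪ S).Nonempty) :
    dK (Gm h S) + Gmap (dK (bE h S)) = bE h S := by
  have hj0U : (h.support ∪ S).min' hU ∈ h.support ∪ S := Finset.min'_mem _ hU
  set j0 := (h.support ∪ S).min' hU with hj0
  have hmin : ∀ x ∈ h.support ∪ S, j0 ≤ x := fun x hx => Finset.min'_le _ _ hx
  have hGd : Gmap (dK (bE h S)) = ∑ i ∈ S, ((-1 : ℚ) ^ ((S.erase i).filter (· < i)).card) •
      Gm (h + Finsupp.single i 1) (S.erase i) := by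
    rw [dK_bE, map_sum]
    refine Finset.sum_congr rfl fun i _ => ?_
    rw [map_smul, Gmap_bE]
  have hUi : ∀ i ∈ S, (h + Finsupp.single i 1).support ∪ S.erase i = h.support ∪ S := by
    intro i hi
    ext x
    simp only [Finset.mem_union, Finsupp.mem_support_iff, Finsupp.add_apply,
      Finsupp.single_apply, Finset.mem_erase]
    rcases eq_or_ne x i with rfl | hxi
    · simp only [if_pos rfl]
      constructor
      · intro _; right; exact hi
      · intro _; left; simp
    · rw [if_neg (fun he => hxi he.symm), Nat.add_zero]
      tauto
  by_cases hj0S : j0 ∈ S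
  · -- the minimal ray is exterior
    have hG0 : Gm h S = 0 := by rw [Gm_eq h S hU rfl, if_pos hj0S]
    rw [hG0, map_zero, zero_add, hGd]
    rw [Finset.sum_eq_single_of_mem j0 hj0S]
    · rw [Gm_eq _ _ hU (hUi j0 hj0S), if_neg (Finset.notMem_erase _ _)]
      have hfe : ((S.erase j0).filter (· < j0)) = ∅ := by
        rw [Finset.filter_eq_empty_iff]
        intro x hx
        have hx1 : x ∈ h.support ∪ S := Finset.mem_union_right _ (Finset.mem_of_mem_erase hx)
        have h2 := hmin x hx1
        have hne : x ≠ j0 := (Finset.mem_erase.1 hx).1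
        exact not_lt.2 (le_of_lt (lt_of_le_of_ne h2 (Ne.symm hne)))
      rw [hfe, Finset.card_empty, pow_zero, one_smul, add_tsub_cancel_right,
        Finset.insert_erase hj0S]
    · intro i hi hne
      rw [Gm_eq _ _ hU (hUi i hi), if_pos (Finset.mem_erase.2 ⟨hne.symm, hj0S⟩), smul_zero]
  · -- the minimal ray is in the polynomial part
    have hj0h : j0 ∈ h.support := by
      rcases Finset.mem_union.1 hj0U with h' | h'
      · exact h'
      · exact absurd h' hj0S
    have hle : Finsupp.single j0 1 ≤ h :=
      Finsupp.single_le_iff.2 (Nat.one_le_iff_ne_zero.2 (Finsupp.mem_support_iff.1 hj0h))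
    have hlt : ∀ i ∈ S, j0 < i := fun i hi =>
      lt_of_le_of_ne (hmin i (Finset.mem_union_right _ hi)) (fun he => hj0S (he ▸ hi))
    have hG : Gm h S = bE (h - Finsupp.single j0 1) (insert j0 S) := by
      rw [Gm_eq h S hU rfl, if_neg hj0S]
    have hfS : S.filter (· < j0) = ∅ := by
      rw [Finset.filter_eq_empty_iff]
      intro x hx
      exact not_lt.2 (le_of_lt (hlt x hx))
    have hDG : dK (Gm h S) = bE h S +
        ∑ i ∈ S, (-(((-1 : ℚ) ^ ((S.erase i).filter (· < i)).card) •
          bE (h - Finsupp.single j0 1 + Finsupp.single i 1) (insert j0 (S.erase i)))) := by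
      rw [hG, dK_bE, Finset.sum_insert hj0S]
      congr 1
      · rw [Finset.erase_insert hj0S, hfS, Finset.card_empty, pow_zero, one_smul,
          tsub_add_cancel_of_le hle]
      · refine Finset.sum_congr rfl fun i hi => ?_
        have hj0i : j0 ≠ i := fun he => hj0S (he ▸ hi)
        rw [Finset.erase_insert_of_ne hj0i, Finset.filter_insert, if_pos (hlt i hi),
          Finset.card_insert_of_notMem
            (fun hc => hj0S (Finset.mem_of_mem_erase (Finset.mem_filter.1 hc).1)),
          pow_succ, mul_comm ((-1 : ℚ) ^ _) _, neg_one_mul, neg_smul]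
    have hGd2 : Gmap (dK (bE h S)) =
        ∑ i ∈ S, (((-1 : ℚ) ^ ((S.erase i).filter (· < i)).card) •
          bE (h - Finsupp.single j0 1 + Finsupp.single i 1) (insert j0 (S.erase i))) := by
      rw [hGd]
      refine Finset.sum_congr rfl fun i hi => ?_
      have hni : j0 ∉ S.erase i := fun hc => hj0S (Finset.mem_of_mem_erase hc)
      rw [Gm_eq _ _ hU (hUi i hi), if_neg hni, tsub_add_eq_add_tsub hle]
    rw [hDG, hGd2, add_assoc, ← Finset.sum_add_distrib]
    simp

lemma Gm_mem_degSub {k : ℕ} (h : ι →₀ ℕ) (S : Finset ι)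
    (hdeg : 2 * (h.sum fun _ e => e) + S.card = k) : Gm h S ∈ degSub (ι := ι) (k - 1) := by
  rcases Gm_cases h S with h0 | ⟨j, hj, hjS, hGm⟩
  · rw [h0]; exact Submodule.zero_mem _
  · rw [hGm]
    refine Submodule.subset_span ⟨h - Finsupp.single j 1, insert j S, ?_, rfl⟩
    have hs := sum_sub_single hj
    rw [Finset.card_insert_of_notMem hjS]
    omega

lemma Gmap_mem_degSub {k : ℕ} (f : KModel ι) (hf : f ∈ degSub (ι := ι) k) :
    Gmap f ∈ degSub (ι := ι) (k - 1) := by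
  refine Submodule.span_induction (p := fun f _ => Gmap f ∈ degSub (ι := ι) (k - 1))
    ?_ ?_ ?_ ?_ hf
  · rintro x ⟨h, S, hdeg, rfl⟩
    rw [Gmap_bE]
    exact Gm_mem_degSub h S hdeg
  · rw [map_zero]; exact Submodule.zero_mem _
  · intro x y _ _ hx hy
    rw [map_add]; exact Submodule.add_mem _ hx hy
  · intro a x _ hx
    rw [map_smul]; exact Submodule.smul_mem _ _ hx

lemma Gmap_mem_span (𝒮 : Set (Finset ι)) (f : KModel ι)
    (hf : f ∈ Submodule.span ℚ {m : KModel ι | ∃ (h : ι →₀ ℕ) (S : Finset ι),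
      (h.support ∪ S) ∉ 𝒮 ∧ m = bE h S}) :
    Gmap f ∈ Submodule.span ℚ {m : KModel ι | ∃ (h : ι →₀ ℕ) (S : Finset ι),
      (h.support ∪ S) ∉ 𝒮 ∧ m = bE h S} := by
  refine Submodule.span_induction (p := fun f _ => Gmap f ∈ Submodule.span ℚ _) ?_ ?_ ?_ ?_ hf
  · rintro x ⟨h, S, hface, rfl⟩
    rw [Gmap_bE]
    rcases Gm_cases h S with h0 | ⟨j, hj, hjS, hGm⟩
    · rw [h0]; exact Submodule.zero_mem _
    · rw [hGm]
      refine Submodule.subset_span ⟨h - Finsupp.single j 1, insert j S, ?_, rfl⟩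
      rw [union_sub_single hj S]
      exact hface
  · rw [map_zero]; exact Submodule.zero_mem _
  · intro x y _ _ hx hy
    rw [map_add]; exact Submodule.add_mem _ hx hy
  · intro a x _ hx
    rw [map_smul]; exact Submodule.smul_mem _ _ hx

lemma hom_span {k : ℕ} (hk : 0 < k) (f : KModel ι) (hf : f ∈ degSub (ι := ι) k) :
    dK (Gmap f) + Gmap (dK f) = f := by
  refine Submodule.span_induction (p := fun f _ => dK (Gmap f) + Gmap (dK f) = f)
    ?_ ?_ ?_ ?_ hf
  · rintro x ⟨h, S, hdeg, rfl⟩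
    rw [Gmap_bE]
    refine hom_bE h S ?_
    rcases Finset.eq_empty_or_nonempty (h.support ∪ S) with he | hne
    · exfalso
      have hS : S = ∅ := Finset.subset_empty.1 (he ▸ Finset.subset_union_right)
      have hh : h = 0 := Finsupp.support_eq_empty.1
        (Finset.subset_empty.1 (he ▸ Finset.subset_union_left))
      subst hS; subst hh
      simp only [Finsupp.sum_zero_index, Finset.card_empty, Nat.mul_zero, Nat.add_zero] at hdeg
      omega
    · exact hne
  · simp
  · intro x y _ _ hx hy
    simp only [map_add]
    rw [add_add_add_comm, hx, hy]
  · intro a x _ hx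
    simp only [map_smul]
    rw [← smul_add, hx]

end HomotopyAux

/-- The cohomology of `(D_F, d)` is `ℚ` in degree `0` and vanishes in
positive degrees. Here `D_F = (ℚ[x_c] ⊗ ⋀(τ_c))/J_F` is presented as the quotient of
the Koszul model by the span `J` of the basis monomials `x^h τ_S` whose combined set
of rays does not span a cone of `F`. Since the degree-0 part of `D_F` consists of the
constants, the claims are: a constant lies in `J` only if it is `0` (so `H⁰ = ℚ`),
and every cocycle of positive degree `k` is, modulo `J`, a coboundary of an element
of degree `k - 1` (so `Hᵏ = 0` for `k > 0`). -/
theorem stmt7 {V : Type*} [NormedAddCommGroup V] [NormedSpace ℝ V]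
    [FiniteDimensional ℝ V] {ι : Type*} [Fintype ι] [DecidableEq ι] [LinearOrder ι]
    (F : SimplicialFan V ι)
    (J : Submodule ℚ (KModel ι))
    (hJ : J = Submodule.span ℚ {m : KModel ι | ∃ (h : ι →₀ ℕ) (S : Finset ι),
        (h.support ∪ S) ∉ F.faces ∧ m = bE h S}) :
    (∀ q : ℚ, (Pi.single ∅ (MvPolynomial.C q) : KModel ι) ∈ J → q = 0) ∧
    (∀ k : ℕ, 0 < k → ∀ f ∈ degSub (ι := ι) k, dK f ∈ J →
      ∃ g ∈ degSub (ι := ι) (k - 1), f - dK g ∈ J) := by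
  constructor
  · intro q hq
    rw [hJ] at hq
    have hker : Submodule.span ℚ {m : KModel ι | ∃ (h : ι →₀ ℕ) (S : Finset ι),
        (h.support ∪ S) ∉ F.faces ∧ m = bE h S} ≤
        LinearMap.ker ((MvPolynomial.lcoeff ℚ 0).comp
          (LinearMap.proj (R := ℚ) (∅ : Finset ι))) := by
      rw [Submodule.span_le]
      rintro m ⟨h, S, hface, rfl⟩
      simp only [SetLike.mem_coe, LinearMap.mem_ker, LinearMap.comp_apply, LinearMap.proj_apply]
      rw [bE, Pi.single_apply]
      rcases eq_or_ne S ∅ with rfl | hS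
      · rw [if_pos rfl]
        have hh : h ≠ 0 := by
          rintro rfl
          simp only [Finsupp.support_zero, Finset.empty_union, Finset.union_empty] at hface
          exact hface F.empty_mem
        rw [MvPolynomial.lcoeff_apply, MvPolynomial.coeff_monomial, if_neg hh]
      · rw [if_neg (fun he : (∅ : Finset ι) = S => hS he.symm), map_zero]
    have h0 := hker hq
    rw [LinearMap.mem_ker, LinearMap.comp_apply, LinearMap.proj_apply] at h0
    simpa using h0
  · intro k hk f hf hdf
    refine ⟨Gmap f, Gmap_mem_degSub f hf, ?_⟩
    have hid := hom_span hk f hf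
    have hfd : f - dK (Gmap f) = Gmap (dK f) := sub_eq_of_eq_add' hid.symm
    rw [hfd, hJ]
    rw [hJ] at hdf
    exact Gmap_mem_span _ _ hdf
end

section
/- Let T be an algebraic torus with cocharacter space V, let Γ ⊂ X^*(T) be a split direct summand, and let V_Γ = {v ∈ V : ⟨χ, v⟩ = 0 for all χ ∈ Γ}. Suppose F is a fan in V such that every χ in some basis of Γ has constant sign on each cone of F. Then for every cone C ∈ F, the relative interior of C is either entirely contained in V_Γ or disjoint from V_Γ; moreover, the collection of cones of F contained in V_Γ forms a fan in V_Γ. -/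
open scoped BigOperators

namespace SimplicialFan

lemma ray_mem_cone {V : Type*} [AddCommGroup V] [Module ℝ V]
    {ι : Type*} [Fintype ι] [DecidableEq ι]
    (F : SimplicialFan V ι) {S : Finset ι} {i : ι} (hi : i ∈ S) :
    F.c i ∈ F.cone S := by
  refine ⟨fun j => if j = i then 1 else 0, fun j => by positivity,
    fun j hj => if_neg (by rintro rfl; exact hj hi), ?_⟩
  rw [Finset.sum_eq_single i]
  · simp
  · intro j _ hj; simp [hj]
  · intro h; exact absurd hi h

lemma cone_mono {V : Type*} [AddCommGroup V] [Module ℝ V]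
    {ι : Type*} [Fintype ι] [DecidableEq ι]
    (F : SimplicialFan V ι) {S' S : Finset ι} (h : S' ⊆ S) :
    F.cone S' ⊆ F.cone S := by
  rintro v ⟨a, ha0, haz, rfl⟩
  refine ⟨a, ha0, fun i hi => haz i (fun h' => hi (h h')), ?_⟩
  rw [Finset.sum_subset h]
  intro j _ hj
  rw [haz j hj, zero_smul]

end SimplicialFan

/-- If every character in some (finite) basis `χ` of `Γ` has
constant sign on each cone of the fan `F`, then the relative interior of each cone of
`F` is either contained in `V_Γ = {v | ⟨χ,v⟩ = 0 ∀ χ ∈ Γ}` or disjoint from it, and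
the cones of `F` contained in `V_Γ` form a fan (a downward closed subfamily of cones,
all lying in `V_Γ`). -/
theorem stmt12 {V : Type*} [NormedAddCommGroup V] [NormedSpace ℝ V]
    [FiniteDimensional ℝ V] {ι : Type*} [Fintype ι] [DecidableEq ι]
    (F : SimplicialFan V ι) {κ : Type*} (χ : κ → (V →ₗ[ℝ] ℝ))
    (hsign : ∀ k, ∀ S ∈ F.faces,
      (∀ v ∈ F.cone S, 0 ≤ χ k v) ∨ (∀ v ∈ F.cone S, χ k v ≤ 0)) :
    (∀ S ∈ F.faces,
      F.relint S ⊆ {v | ∀ k, χ k v = 0} ∨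
      Disjoint (F.relint S) {v | ∀ k, χ k v = 0}) ∧
    (∀ S ∈ F.faces, F.cone S ⊆ {v | ∀ k, χ k v = 0} →
      ∀ S' ⊆ S, S' ∈ F.faces ∧ F.cone S' ⊆ {v | ∀ k, χ k v = 0}) := by

  constructor
  · intro S hS
    by_cases hne : (F.relint S ∩ {v | ∀ k, χ k v = 0}).Nonempty
    · left
      obtain ⟨v, ⟨a, hapos, rfl⟩, hv0⟩ := hne
      have hray : ∀ k, ∀ i ∈ S, χ k (F.c i) = 0 := by
        intro k i hi
        have hsum : ∑ j ∈ S, a j * χ k (F.c j) = 0 := by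
          have := hv0 k
          simpa [map_sum, map_smul, smul_eq_mul] using this
        rcases hsign k S hS with hpos | hneg
        · have hterm : ∀ j ∈ S, 0 ≤ a j * χ k (F.c j) := fun j hj =>
            mul_nonneg (hapos j hj).le (hpos _ (F.ray_mem_cone hj))
          have := (Finset.sum_eq_zero_iff_of_nonneg hterm).mp hsum i hi
          have hai := (hapos i hi).ne'
          rcases mul_eq_zero.mp this with h | h
          · exact absurd h hai
          · exact h
        · have hterm : ∀ j ∈ S, 0 ≤ a j * (-(χ k (F.c j))) := fun j hj =>
            mul_nonneg (hapos j hj).le (neg_nonneg.mpr (hneg _ (F.ray_mem_cone hj)))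
          have hsum' : ∑ j ∈ S, a j * (-(χ k (F.c j))) = 0 := by
            rw [← neg_eq_zero, ← Finset.sum_neg_distrib]
            simp only [neg_neg, mul_neg] at *
            simpa using hsum
          have := (Finset.sum_eq_zero_iff_of_nonneg hterm).mp hsum' i hi
          have hai := (hapos i hi).ne'
          rcases mul_eq_zero.mp this with h | h
          · exact absurd h hai
          · linarith [neg_eq_zero.mp h]
      rintro w ⟨b, hbpos, rfl⟩ k
      rw [map_sum]
      apply Finset.sum_eq_zero
      intro j hj
      rw [map_smul, smul_eq_mul, hray k j hj, mul_zero]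
    · right
      rw [Set.disjoint_iff_inter_eq_empty]
      exact Set.not_nonempty_iff_eq_empty.mp hne
  · intro S hS hsub S' hS'
    exact ⟨F.down_closed S hS S' hS', fun v hv => hsub (F.cone_mono hS' hv)⟩
end
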